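/- Define F: ℝ → ℝ by F(x) = Φ(x) for |x| ≥ ε, F(x) = Φ(-ε) for -ε < x < -θε, F(x) = Φ(ε) for θε < x < ε, and F(x) = 1/2 + ((Φ(ε) - 1/2)/(θε))·x for |x| ≤ θε, where 0 < ε < 1 and θ ∈ (0,1) satisfies ∫_0^ε x² dΦ(x) = ((θε)²/3)(Φ(ε) - 1/2). Then F is a distribution function with mean 0, variance 1, and vanishing third pseudomoment: ∫ x³ d(F - Φ)(x) = 0. -/

import Mathlib

open MeasureTheory ProbabilityTheory Real Set

/-- Standard normal distribution function. -/
noncomputable def stdNormalCDF (x : ℝ) : ℝ := ((gaussianReal 0 1) (Set.Iic x)).toReal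

/-- The distribution function of the example. -/
noncomputable def exampleF (ε θ : ℝ) (x : ℝ) : ℝ :=
  if ε ≤ |x| then stdNormalCDF x
  else if x < -(θ * ε) then stdNormalCDF (-ε)
  else if x ≤ θ * ε then 1 / 2 + (stdNormalCDF ε - 1 / 2) / (θ * ε) * x
  else stdNormalCDF ε

section Aux

open Filter Topology
open scoped ENNReal NNReal

lemma gauss_map_neg : Measure.map (fun x : ℝ => -x) (gaussianReal 0 1) = gaussianReal 0 1 := by
  have h := gaussianReal_map_const_mul (μ := 0) (v := 1) (-1)
  simp only [neg_one_mul, mul_zero] at h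
  convert h using 2
  ext : 1
  simp [neg_one_sq]

instance : NullSingletonClass (gaussianReal (0:ℝ) 1) := by
  constructor
  intro x
  refine gaussianReal_absolutelyContinuous 0 one_ne_zero ?_
  simp

lemma gauss_integral_neg (f : ℝ → ℝ) :
    ∫ x, f (-x) ∂(gaussianReal 0 1) = ∫ x, f x ∂(gaussianReal 0 1) := by
  have h : Measure.map (⇑(Homeomorph.neg ℝ).toMeasurableEquiv) (gaussianReal 0 1)
      = gaussianReal 0 1 := gauss_map_neg
  conv_rhs => rw [← h]
  rw [MeasureTheory.integral_map_equiv (Homeomorph.neg ℝ).toMeasurableEquiv f]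
  rfl

lemma gauss_measure_neg (s : Set ℝ) (hs : MeasurableSet s) :
    gaussianReal 0 1 ((fun x : ℝ => -x) ⁻¹' s) = gaussianReal 0 1 s := by
  conv_rhs => rw [← gauss_map_neg]
  rw [Measure.map_apply measurable_neg hs]

lemma gauss_odd_integral (f : ℝ → ℝ) (hodd : ∀ x, f (-x) = - f x)
    (S : Set ℝ) (hS : MeasurableSet S) (hsym : ∀ x, -x ∈ S ↔ x ∈ S) :
    ∫ x in S, f x ∂(gaussianReal 0 1) = 0 := by
  rw [← integral_indicator hS]
  have h2 : ∀ x, S.indicator f (-x) = - S.indicator f x := by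
    intro x
    by_cases hx : x ∈ S
    · rw [indicator_of_mem ((hsym x).2 hx), indicator_of_mem hx, hodd]
    · rw [indicator_of_notMem (fun h => hx ((hsym x).1 h)), indicator_of_notMem hx, neg_zero]
  have h3 := gauss_integral_neg (S.indicator f)
  simp_rw [h2, integral_neg] at h3
  linarith

lemma gauss_even_reflect (f : ℝ → ℝ) (heven : ∀ x, f (-x) = f x)
    (s : Set ℝ) (hs : MeasurableSet s) :
    ∫ x in (fun x : ℝ => -x) ⁻¹' s, f x ∂(gaussianReal 0 1)
      = ∫ x in s, f x ∂(gaussianReal 0 1) := by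
  rw [← integral_indicator hs, ← integral_indicator (hs.preimage measurable_neg)]
  have h2 : ∀ x, ((fun x : ℝ => -x) ⁻¹' s).indicator f x = s.indicator f (-x) := by
    intro x
    by_cases hx : -x ∈ s
    · rw [indicator_of_mem hx, indicator_of_mem (mem_preimage.2 hx)]
      exact (heven x).symm
    · rw [indicator_of_notMem hx, indicator_of_notMem (fun h => hx (mem_preimage.1 h))]
  simp_rw [h2]
  exact gauss_integral_neg (s.indicator f)

lemma gauss_Iic_neg (x : ℝ) :
    gaussianReal 0 1 (Iic (-x)) = gaussianReal 0 1 (Ici x) := by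
  have h1 : (fun y : ℝ => -y) ⁻¹' (Ici x) = Iic (-x) := by
    ext y; simp [le_neg]
  rw [← h1, gauss_measure_neg _ measurableSet_Ici]

lemma stdNormalCDF_neg (x : ℝ) : stdNormalCDF (-x) = 1 - stdNormalCDF x := by
  have h3 : gaussianReal 0 1 (Ici x) = 1 - gaussianReal 0 1 (Iic x) := by
    rw [← prob_compl_eq_one_sub measurableSet_Iic, compl_Iic,
      ← measure_congr (Ioi_ae_eq_Ici (μ := gaussianReal 0 1) (a := x))]
  rw [stdNormalCDF, stdNormalCDF, gauss_Iic_neg, h3,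
    ENNReal.toReal_sub_of_le prob_le_one ENNReal.one_ne_top, ENNReal.toReal_one]

lemma stdNormalCDF_zero : stdNormalCDF 0 = 1 / 2 := by
  have := stdNormalCDF_neg 0
  rw [neg_zero] at this
  linarith

lemma stdNormalCDF_mono : Monotone stdNormalCDF := by
  intro a b hab
  exact ENNReal.toReal_mono (measure_ne_top _ _) (measure_mono (Iic_subset_Iic.2 hab))

lemma gauss_Ioc (a b : ℝ) (hab : a ≤ b) :
    ((gaussianReal 0 1) (Ioc a b)).toReal = stdNormalCDF b - stdNormalCDF a := by
  have h : Ioc a b = Iic b \ Iic a := by ext y; simp [and_comm]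
  rw [h, measure_diff (Iic_subset_Iic.2 hab) measurableSet_Iic.nullMeasurableSet
    (measure_ne_top _ _), ENNReal.toReal_sub_of_le (measure_mono (Iic_subset_Iic.2 hab))
    (measure_ne_top _ _)]
  rfl

lemma gauss_pdf_eq (x : ℝ) :
    gaussianPDFReal 0 1 x = (√(2 * π))⁻¹ * rexp (-(1/2) * x ^ 2) := by
  simp only [gaussianPDFReal, NNReal.coe_one, mul_one, sub_zero]
  ring_nf

lemma gauss_density : gaussianReal (0:ℝ) 1
    = (volume : Measure ℝ).withDensity (fun x => ((gaussianPDFReal 0 1 x).toNNReal : ℝ≥0∞)) := by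
  rw [gaussianReal_of_var_ne_zero 0 one_ne_zero]
  rfl

lemma gauss_integral_eq (g : ℝ → ℝ) :
    ∫ x, g x ∂(gaussianReal 0 1) = ∫ x, gaussianPDFReal 0 1 x * g x := by
  rw [gauss_density, integral_withDensity_eq_integral_smul
    (measurable_gaussianPDFReal 0 1).real_toNNReal g]
  congr 1 with x
  simp [NNReal.smul_def, Real.coe_toNNReal _ (gaussianPDFReal_nonneg 0 1 x)]

lemma gauss_integrable_iff (g : ℝ → ℝ) :
    Integrable g (gaussianReal 0 1) ↔ Integrable (fun x => gaussianPDFReal 0 1 x * g x) := by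
  rw [gauss_density, integrable_withDensity_iff_integrable_smul
    (measurable_gaussianPDFReal 0 1).real_toNNReal]
  constructor <;> intro h <;> refine h.congr (Filter.Eventually.of_forall fun x => ?_) <;>
    simp [NNReal.smul_def, Real.coe_toNNReal _ (gaussianPDFReal_nonneg 0 1 x)]

lemma integrable_pow_exp (k : ℕ) :
    Integrable (fun x : ℝ => x ^ k * rexp (-(1/2) * x ^ 2)) := by
  have h := integrable_rpow_mul_exp_neg_mul_sq (b := 1/2) (by norm_num)
    (s := (k : ℝ)) (lt_of_lt_of_le neg_one_lt_zero (Nat.cast_nonneg k))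
  refine h.congr (Filter.Eventually.of_forall fun x => ?_)
  simp [Real.rpow_natCast]

lemma gauss_integrable_pow (k : ℕ) : Integrable (fun x : ℝ => x ^ k) (gaussianReal 0 1) := by
  rw [gauss_integrable_iff]
  have h := (integrable_pow_exp k).const_mul (√(2 * π))⁻¹
  refine h.congr (Filter.Eventually.of_forall fun x => ?_)
  simp only [gauss_pdf_eq]; ring

lemma tendsto_mul_exp_atTop :
    Tendsto (fun x : ℝ => x * rexp (-(1/2) * x ^ 2)) atTop (𝓝 0) := by
  have hexp : Tendsto (fun x : ℝ => rexp (-(1/2) * x)) atTop (𝓝 0) := by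
    have h2 : Tendsto (fun x : ℝ => (1/2) * x) atTop atTop :=
      tendsto_id.const_mul_atTop (by norm_num)
    have h3 := Real.tendsto_exp_neg_atTop_nhds_zero.comp h2
    refine h3.congr fun x => by simp [Function.comp]
  have h := (rpow_mul_exp_neg_mul_sq_isLittleO_exp_neg (by norm_num : (0:ℝ) < 1/2)
      1).trans_tendsto hexp
  refine h.congr' (Filter.Eventually.of_forall fun x => ?_)
  rw [Real.rpow_one]

lemma integral_sq_exp : ∫ x : ℝ, x ^ 2 * rexp (-(1/2) * x ^ 2) = √(2 * π) := by
  set f : ℝ → ℝ := fun x => -x * rexp (-(1/2) * x ^ 2) with hf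
  set f' : ℝ → ℝ := fun x => x ^ 2 * rexp (-(1/2) * x ^ 2) - rexp (-(1/2) * x ^ 2) with hf'
  have hderiv : ∀ x : ℝ, HasDerivAt f (f' x) x := by
    intro x
    have h1 : HasDerivAt (fun y : ℝ => -(1/2) * y ^ 2) (-(1/2) * (2 * x ^ 1)) x :=
      (hasDerivAt_pow 2 x).const_mul _
    have h3 := ((hasDerivAt_id x).neg).mul h1.exp
    refine h3.congr_deriv ?_
    simp [hf']
    ring
  have hint : Integrable f' volume :=
    (integrable_pow_exp 2).sub (by simpa using integrable_pow_exp 0)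
  have htop : Tendsto f atTop (𝓝 0) := by
    simpa [hf] using tendsto_mul_exp_atTop.neg
  have hbot : Tendsto f atBot (𝓝 0) := by
    have h := tendsto_mul_exp_atTop.comp tendsto_neg_atBot_atTop
    refine h.congr fun x => ?_
    simp [hf, Function.comp]
  have hIoi : ∫ x in Ioi (0:ℝ), f' x = 0 - f 0 :=
    integral_Ioi_of_hasDerivAt_of_tendsto' (fun x _ => hderiv x) hint.integrableOn htop
  have hIic : ∫ x in Iic (0:ℝ), f' x = f 0 - 0 :=
    integral_Iic_of_hasDerivAt_of_tendsto' (fun x _ => hderiv x) hint.integrableOn hbot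
  have hsplit : (∫ x in Iic (0:ℝ), f' x) + ∫ x in Ioi (0:ℝ), f' x = ∫ x, f' x := by
    rw [← compl_Iic]
    exact integral_add_compl measurableSet_Iic hint
  have htotal : ∫ x, f' x = 0 := by rw [← hsplit, hIoi, hIic]; ring
  have hsub : (∫ x : ℝ, x ^ 2 * rexp (-(1/2) * x ^ 2)) - ∫ x : ℝ, rexp (-(1/2) * x ^ 2) = 0 := by
    rw [← integral_sub (integrable_pow_exp 2) (by simpa using integrable_pow_exp 0)]
    exact htotal
  have hgauss : ∫ x : ℝ, rexp (-(1/2) * x ^ 2) = √(2 * π) := by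
    calc ∫ x : ℝ, rexp (-(1/2) * x ^ 2) = √(π / (1/2)) := by
          simpa using integral_gaussian (1/2)
      _ = √(2 * π) := by norm_num [mul_comm]
  linarith

lemma gauss_sq_moment : ∫ x, x ^ 2 ∂(gaussianReal 0 1) = 1 := by
  rw [gauss_integral_eq]
  have h : ∀ x : ℝ, gaussianPDFReal 0 1 x * x ^ 2
      = (√(2 * π))⁻¹ * (x ^ 2 * rexp (-(1/2) * x ^ 2)) := by
    intro x; rw [gauss_pdf_eq]; ring
  simp_rw [h]
  rw [integral_const_mul, integral_sq_exp, inv_mul_cancel₀]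
  exact (Real.sqrt_pos.2 (by positivity)).ne'

end Aux

theorem exampleF_is_df_with_vanishing_pseudomoments
    (ε θ : ℝ) (hε : ε ∈ Set.Ioo (0:ℝ) 1) (hθ : θ ∈ Set.Ioo (0:ℝ) 1)
    (hθeq : (∫ x in Set.Ioc (0:ℝ) ε, x ^ 2 ∂gaussianReal 0 1) =
      (θ * ε) ^ 2 / 3 * (stdNormalCDF ε - 1 / 2)) :
    ∃ μ : Measure ℝ, IsProbabilityMeasure μ ∧
      (∀ x, (μ (Set.Iic x)).toReal = exampleF ε θ x) ∧
      (∫ x, x ∂μ) = 0 ∧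
      (∫ x, x ^ 2 ∂μ) = 1 ∧
      (∫ x, x ^ 3 ∂μ) - (∫ x, x ^ 3 ∂gaussianReal 0 1) = 0 := by
  obtain ⟨hε0, hε1⟩ := hε
  obtain ⟨hθ0, hθ1⟩ := hθ
  set γ : Measure ℝ := gaussianReal 0 1 with hγ
  set a : ℝ := θ * ε with haa
  have ha0 : 0 < a := mul_pos hθ0 hε0
  have haε : a < ε := by
    calc a = θ * ε := rfl
      _ < 1 * ε := by exact mul_lt_mul_of_pos_right hθ1 hε0
      _ = ε := one_mul ε
  set S : Set ℝ := Iic (-ε) ∪ Ici ε with hSdef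
  have hS : MeasurableSet S := measurableSet_Iic.union measurableSet_Ici
  have hsymS : ∀ x, -x ∈ S ↔ x ∈ S := by
    intro x
    simp only [hSdef, mem_union, mem_Iic, mem_Ici]
    constructor <;> rintro (h | h)
    · right; linarith
    · left; linarith
    · right; linarith
    · left; linarith
  set c : ℝ := (stdNormalCDF ε - 1 / 2) / (θ * ε) with hcdef
  have hΦhalf : 1 / 2 ≤ stdNormalCDF ε := by
    rw [← stdNormalCDF_zero]
    exact stdNormalCDF_mono hε0.le
  have hc0 : 0 ≤ c := div_nonneg (by linarith) (by linarith)
  have hca : c * a = stdNormalCDF ε - 1 / 2 := by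
    rw [hcdef, div_mul_eq_mul_div, mul_div_assoc, ← haa, div_self ha0.ne', mul_one]
  have hΦneg : stdNormalCDF (-ε) = 1 - stdNormalCDF ε := stdNormalCDF_neg ε
  clear_value a c
  set μ : Measure ℝ := γ.restrict S
      + (ENNReal.ofReal c) • (volume : Measure ℝ).restrict (Ioc (-a) a) with hμdef
  -- measure of Iic x
  have hvolIoc : ∀ (u v : ℝ), u ≤ v → ((volume : Measure ℝ) (Ioc u v)).toReal = v - u := by
    intro u v huv
    rw [Real.volume_Ioc, ENNReal.toReal_ofReal (by linarith)]
  have key : ∀ x, (μ (Iic x)).toReal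
      = (γ (Iic x ∩ S)).toReal + c * ((volume (Iic x ∩ Ioc (-a) a)).toReal) := by
    intro x
    rw [hμdef, Measure.add_apply, Measure.smul_apply,
      Measure.restrict_apply measurableSet_Iic, Measure.restrict_apply measurableSet_Iic,
      smul_eq_mul, ENNReal.toReal_add (measure_ne_top _ _) (ENNReal.mul_ne_top
        ENNReal.ofReal_ne_top (ne_top_of_le_ne_top (by rw [Real.volume_Ioc]; exact
          ENNReal.ofReal_ne_top) (measure_mono inter_subset_right))),
      ENNReal.toReal_mul, ENNReal.toReal_ofReal hc0]
  -- CDF identity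
  have hcdf : ∀ x, (μ (Iic x)).toReal = exampleF ε θ x := by
    intro x
    rcases le_or_gt x (-ε) with hx | hx
    · -- x ≤ -ε
      have h1 : Iic x ∩ S = Iic x := inter_eq_left.2 fun y hy => Or.inl (le_trans hy hx)
      have h2 : Iic x ∩ Ioc (-a) a = ∅ := by
        ext y
        simp only [mem_inter_iff, mem_Iic, mem_Ioc, mem_empty_iff_false, iff_false, not_and]
        intro h1' h2'
        intro
        linarith
      have habs : ε ≤ |x| := by
        rw [abs_of_nonpos (by linarith)]; linarith
      rw [key, h1, h2, exampleF, if_pos habs]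
      simp [stdNormalCDF, hγ]
    · rcases lt_or_ge x ε with hx2 | hx2
      · -- -ε < x < ε
        have h1 : Iic x ∩ S = Iic (-ε) := by
          ext y
          simp only [hSdef, mem_inter_iff, mem_Iic, mem_union, mem_Ici]
          constructor
          · rintro ⟨h1', h2' | h2'⟩
            · exact h2'
            · linarith
          · intro h; exact ⟨by linarith, Or.inl h⟩
        have habs : ¬ ε ≤ |x| := by
          rw [not_le, abs_lt]; exact ⟨by linarith, hx2⟩
        rcases lt_or_ge x (-a) with hx3 | hx3
        · -- -ε < x < -a
          have h2 : Iic x ∩ Ioc (-a) a = ∅ := by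
            ext y
            simp only [mem_inter_iff, mem_Iic, mem_Ioc, mem_empty_iff_false, iff_false, not_and]
            intro h1' h2'
            intro
            linarith
          rw [key, h1, h2, exampleF, if_neg habs, if_pos (by rw [← haa]; exact hx3)]
          simp [stdNormalCDF, hγ]
        · rcases le_or_gt x a with hx4 | hx4
          · -- -a ≤ x ≤ a
            have h2 : Iic x ∩ Ioc (-a) a = Ioc (-a) x := by
              ext y
              simp only [mem_inter_iff, mem_Iic, mem_Ioc]
              constructor
              · rintro ⟨h1', h2', h3'⟩; exact ⟨h2', h1'⟩
              · rintro ⟨h1', h2'⟩; exact ⟨h2', h1', by linarith⟩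
            rw [key, h1, h2, exampleF, if_neg habs,
              if_neg (by rw [← haa]; exact not_lt.2 hx3), if_pos (by rw [← haa]; exact hx4)]
            have h3 : (γ (Iic (-ε))).toReal = stdNormalCDF (-ε) := rfl
            have hexp : c * (x - -a) = c * x + (stdNormalCDF ε - 1 / 2) := by
              rw [← hca]; ring
            have hc2 : (stdNormalCDF ε - 1 / 2) / a = c := by rw [hcdef, haa]
            rw [h3, hvolIoc _ _ (by linarith), hΦneg, ← haa, hc2, hexp]
            ring
          · -- a < x < ε
            have h2 : Iic x ∩ Ioc (-a) a = Ioc (-a) a :=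
              inter_eq_right.2 fun y hy => le_trans hy.2 hx4.le
            rw [key, h1, h2, exampleF, if_neg habs,
              if_neg (by rw [← haa]; intro h; linarith),
              if_neg (by rw [← haa]; exact not_le.2 hx4)]
            have h3 : (γ (Iic (-ε))).toReal = stdNormalCDF (-ε) := rfl
            have hexp : c * (a - -a) = c * a + c * a := by ring
            rw [h3, hvolIoc _ _ (by linarith), hΦneg]
            linarith [hca, hexp]
      · -- ε ≤ x
        have h1 : Iic x ∩ S = Iic (-ε) ∪ Icc ε x := by
          ext y
          simp only [hSdef, mem_inter_iff, mem_Iic, mem_union, mem_Ici, mem_Icc]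
          constructor
          · rintro ⟨h1', h2' | h2'⟩
            · exact Or.inl h2'
            · exact Or.inr ⟨h2', h1'⟩
          · rintro (h | ⟨h1', h2'⟩)
            · exact ⟨by linarith, Or.inl h⟩
            · exact ⟨h2', Or.inr h1'⟩
        have h2 : Iic x ∩ Ioc (-a) a = Ioc (-a) a :=
          inter_eq_right.2 fun y hy => le_trans hy.2 (by linarith)
        have hdisj : Disjoint (Iic (-ε)) (Icc ε x) := by
          rw [disjoint_left]
          intro y hy1 hy2
          simp only [mem_Iic] at hy1
          simp only [mem_Icc] at hy2
          linarith
        have h3 : (γ (Iic (-ε) ∪ Icc ε x)).toReal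
            = stdNormalCDF (-ε) + (stdNormalCDF x - stdNormalCDF ε) := by
          rw [measure_union hdisj measurableSet_Icc,
            ENNReal.toReal_add (measure_ne_top _ _) (measure_ne_top _ _),
            ← measure_congr (Ioc_ae_eq_Icc (μ := γ) (a := ε) (b := x)), gauss_Ioc _ _ hx2]
          rfl
        have habs : ε ≤ |x| := by rw [abs_of_nonneg (by linarith)]; exact hx2
        have hexp : c * (a - -a) = c * a + c * a := by ring
        rw [key, h1, h2, exampleF, if_pos habs, h3, hvolIoc _ _ (by linarith), hΦneg]
        linarith [hca, hexp]
  -- probability measure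
  have hprob : IsProbabilityMeasure μ := by
    constructor
    have h1 : μ univ = γ S + ENNReal.ofReal c * volume (Ioc (-a) a) := by
      rw [hμdef, Measure.add_apply, Measure.smul_apply, Measure.restrict_apply_univ,
        Measure.restrict_apply_univ, smul_eq_mul]
    have hne : μ univ ≠ ⊤ := by
      rw [h1]
      exact ENNReal.add_ne_top.2 ⟨measure_ne_top _ _, ENNReal.mul_ne_top ENNReal.ofReal_ne_top
        (by rw [Real.volume_Ioc]; exact ENNReal.ofReal_ne_top)⟩
    rw [← ENNReal.toReal_eq_one_iff]
    have hdisj : Disjoint (Iic (-ε)) (Ici ε) := by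
      rw [disjoint_left]
      intro y hy1 hy2
      simp only [mem_Iic] at hy1
      simp only [mem_Ici] at hy2
      linarith
    have h2 : (γ S).toReal = 2 * (1 - stdNormalCDF ε) := by
      rw [hSdef, measure_union hdisj measurableSet_Ici,
        ENNReal.toReal_add (measure_ne_top _ _) (measure_ne_top _ _)]
      have h3 : γ (Ici ε) = γ (Iic (-ε)) := (gauss_Iic_neg ε).symm
      have h4 : (γ (Iic (-ε))).toReal = stdNormalCDF (-ε) := rfl
      rw [h3, h4, hΦneg]
      ring
    rw [h1, ENNReal.toReal_add (measure_ne_top _ _) (ENNReal.mul_ne_top ENNReal.ofReal_ne_top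
        (by rw [Real.volume_Ioc]; exact ENNReal.ofReal_ne_top)),
      ENNReal.toReal_mul, ENNReal.toReal_ofReal hc0, h2, hvolIoc _ _ (by linarith)]
    have hexp : c * (a - -a) = c * a + c * a := by ring
    linarith [hca, hexp]
  -- integral decomposition
  have hint2 : ∀ k : ℕ, Integrable (fun x : ℝ => x ^ k)
      ((ENNReal.ofReal c) • (volume : Measure ℝ).restrict (Ioc (-a) a)) := by
    intro k
    exact ((intervalIntegral.intervalIntegrable_pow k).1).smul_measure ENNReal.ofReal_ne_top
  have hdecomp : ∀ k : ℕ, ∫ x, x ^ k ∂μ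
      = (∫ x in S, x ^ k ∂γ) + c * ∫ x in Ioc (-a) a, x ^ k := by
    intro k
    rw [hμdef, integral_add_measure ((gauss_integrable_pow k).restrict) (hint2 k),
      integral_smul_measure, ENNReal.toReal_ofReal hc0, smul_eq_mul]
  have hIocpow : ∀ k : ℕ, ∫ x in Ioc (-a) a, (x:ℝ) ^ k
      = (a ^ (k+1) - (-a) ^ (k+1)) / (k+1) := by
    intro k
    rw [← intervalIntegral.integral_of_le (by linarith : -a ≤ a), integral_pow]
  -- first moment
  have hm1 : ∫ x, x ∂μ = 0 := by
    have h := hdecomp 1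
    simp only [pow_one] at h
    rw [h, gauss_odd_integral (fun x => x) (fun x => rfl) S hS hsymS]
    have h2 := hIocpow 1
    simp only [pow_one] at h2
    rw [h2]
    push_cast
    ring
  -- third moment
  have hodd3 : ∀ x : ℝ, (-x) ^ 3 = -(x ^ 3) := fun x => by ring
  have hm3 : ∫ x, x ^ 3 ∂μ = 0 := by
    rw [hdecomp 3, gauss_odd_integral (fun x => x ^ 3) hodd3 S hS hsymS, hIocpow 3]
    push_cast
    ring
  have hg3 : ∫ x, x ^ 3 ∂γ = 0 := by
    have h := gauss_odd_integral (fun x => x ^ 3) hodd3 univ MeasurableSet.univ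
      (fun x => Iff.rfl)
    rwa [Measure.restrict_univ] at h
  -- second moment
  have hm2 : ∫ x, x ^ 2 ∂μ = 1 := by
    set I : ℝ := ∫ x in Ioc (0:ℝ) ε, x ^ 2 ∂γ with hI
    have hScompl : Sᶜ = Ioo (-ε) ε := by
      rw [hSdef, compl_union, compl_Iic, compl_Ici, Ioi_inter_Iio]
    have hIoo : ∫ x in Ioo (-ε) ε, x ^ 2 ∂γ = ∫ x in Ioc (-ε) ε, x ^ 2 ∂γ :=
      setIntegral_congr_set Ioo_ae_eq_Ioc
    have hpre : (fun x : ℝ => -x) ⁻¹' (Ico 0 ε) = Ioc (-ε) 0 := by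
      ext y
      simp only [mem_preimage, mem_Ico, mem_Ioc]
      constructor
      · rintro ⟨h1, h2⟩; exact ⟨by linarith, by linarith⟩
      · rintro ⟨h1, h2⟩; exact ⟨by linarith, by linarith⟩
    have hleft : ∫ x in Ioc (-ε) 0, x ^ 2 ∂γ = I := by
      rw [← hpre, gauss_even_reflect (fun x => x ^ 2) (fun x => by ring) _ measurableSet_Ico]
      rw [hI]
      exact setIntegral_congr_set Ico_ae_eq_Ioc
    have hsplitIoc : ∫ x in Ioc (-ε) ε, x ^ 2 ∂γ = 2 * I := by
      rw [← Set.Ioc_union_Ioc_eq_Ioc (by linarith : -ε ≤ (0:ℝ)) hε0.le,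
        setIntegral_union (Ioc_disjoint_Ioc_of_le le_rfl) measurableSet_Ioc
          ((gauss_integrable_pow 2).integrableOn) ((gauss_integrable_pow 2).integrableOn),
        hleft]
      ring
    have hall : (∫ x in S, x ^ 2 ∂γ) + ∫ x in Sᶜ, x ^ 2 ∂γ = 1 := by
      rw [integral_add_compl hS (gauss_integrable_pow 2)]
      exact gauss_sq_moment
    have hSint : ∫ x in S, x ^ 2 ∂γ = 1 - 2 * I := by
      rw [hScompl, hIoo, hsplitIoc] at hall
      linarith
    have hIval : I = a ^ 2 / 3 * (stdNormalCDF ε - 1 / 2) := hθeq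
    have h5 : c * ((a ^ (2+1) - (-a) ^ (2+1)) / ((2:ℕ)+1 : ℝ)) = 2 * a ^ 2 / 3 * (c * a) := by
      push_cast; ring
    rw [hdecomp 2, hSint, hIocpow 2, h5, hca, hIval]
    ring
  exact ⟨μ, hprob, hcdf, hm1, hm2, by rw [hm3, hg3, sub_zero]⟩
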